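/- arXiv:1407.2199 — 3 statements merged into one kernel-verified Lean document; each statement's English description precedes it below -/
import Mathlib

section
/- Let (G,p) be an r-dimensional bar framework on n nodes in ℝ^r, with r ≤ n−2. If there exists a positive semidefinite stress matrix Ω of (G,p) of rank n−r−1, and the configuration p is in general position in ℝ^r, then (G,p) is universally rigid. -/
open Matrix

/-- A configuration `p` in `ℝ^r` is `r`-dimensional if its points affinely span `ℝ^r`. -/
def IsRDimensional {n r : ℕ} (p : Fin n → EuclideanSpace ℝ (Fin r)) : Prop :=
  affineSpan ℝ (Set.range p) = ⊤

/-- A configuration is in general position in `ℝ^r` if every `r+1` of its points are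
affinely independent. -/
def InGeneralPosition {n r : ℕ} (p : Fin n → EuclideanSpace ℝ (Fin r)) : Prop :=
  ∀ s : Finset (Fin n), s.card = r + 1 → AffineIndependent ℝ (fun i : s => p i)

/-- `(G, q)` is equivalent to `(G, p)`: corresponding edge lengths agree. -/
def FrameworkEquiv {n r r' : ℕ} (G : SimpleGraph (Fin n))
    (p : Fin n → EuclideanSpace ℝ (Fin r)) (q : Fin n → EuclideanSpace ℝ (Fin r')) : Prop :=
  ∀ i j : Fin n, G.Adj i j → ‖q i - q j‖ = ‖p i - p j‖

/-- Two configurations are congruent: all pairwise distances agree. -/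
def ConfigCongruent {n r r' : ℕ} (p : Fin n → EuclideanSpace ℝ (Fin r))
    (q : Fin n → EuclideanSpace ℝ (Fin r')) : Prop :=
  ∀ i j : Fin n, ‖q i - q j‖ = ‖p i - p j‖

/-- `(G, p)` is universally rigid. -/
def UniversallyRigid {n r : ℕ} (G : SimpleGraph (Fin n))
    (p : Fin n → EuclideanSpace ℝ (Fin r)) : Prop :=
  ∀ r' : ℕ, 1 ≤ r' → r' ≤ n - 1 → ∀ q : Fin n → EuclideanSpace ℝ (Fin r'),
    IsRDimensional q → FrameworkEquiv G p q → ConfigCongruent p q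

/-- `G` is `k`-vertex connected. -/
def IsKConnected {n : ℕ} (G : SimpleGraph (Fin n)) (k : ℕ) : Prop :=
  (n = k + 1 ∧ G = ⊤) ∨
  (k + 2 ≤ n ∧ ∀ S : Finset (Fin n), S.card = k - 1 →
    (G.induce ((↑S : Set (Fin n))ᶜ)).Connected)

/-- The configuration matrix of `p`. -/
def configMatrix {n r : ℕ} (p : Fin n → EuclideanSpace ℝ (Fin r)) : Matrix (Fin n) (Fin r) ℝ :=
  Matrix.of fun i k => p i k

/-- `Ω` is a stress matrix of `(G, p)`. -/
def IsStressMatrix {n r : ℕ} (G : SimpleGraph (Fin n)) (p : Fin n → EuclideanSpace ℝ (Fin r))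
    (Ω : Matrix (Fin n) (Fin n) ℝ) : Prop :=
  Ω.IsSymm ∧ (∀ i j : Fin n, i ≠ j → ¬ G.Adj i j → Ω i j = 0) ∧
  Ω * configMatrix p = 0 ∧ Ω *ᵥ (fun _ => (1 : ℝ)) = 0

/-- The matrix `[Pᵀ; eᵀ]` obtained by stacking `Pᵀ` on top of the all-ones row `eᵀ`. -/
def galeStack {n r : ℕ} (p : Fin n → EuclideanSpace ℝ (Fin r)) :
    Matrix (Fin r ⊕ Unit) (Fin n) ℝ :=
  Matrix.fromRows (Matrix.of fun k i => p i k) (Matrix.of fun _ _ => (1 : ℝ))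

/-- `Z` is a Gale matrix of `p`: its columns form a basis of the null space of `[Pᵀ; eᵀ]`. -/
def IsGaleMatrix {n r : ℕ} (p : Fin n → EuclideanSpace ℝ (Fin r))
    (Z : Matrix (Fin n) (Fin (n - r - 1)) ℝ) : Prop :=
  LinearIndependent ℝ (fun j : Fin (n - r - 1) => fun i => Z i j) ∧
  Submodule.span ℝ (Set.range (fun j : Fin (n - r - 1) => fun i => Z i j)) =
    LinearMap.ker (galeStack p).mulVecLin

/-!
Since `Ω` kills the affine functions of `p`, which form an `(r + 1)`-dimensional space because `p`
spans `ℝ^r`, and `Ω` has rank `n - r - 1`, its kernel consists exactly of them. For an equivalent configuration `q` the energy `∑ Ωᵢⱼ ‖qᵢ - qⱼ‖²` equals that of `p`,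
which is `0`; as `Ω ⪰ 0` this forces every coordinate of `q` into `ker Ω`, so `q` is an affine
image `qᵢ = A pᵢ + b` of `p`. Then `‖qᵢ - qⱼ‖² - ‖pᵢ - pⱼ‖² = β (pᵢ - pⱼ) (pᵢ - pⱼ)` for the
bilinear form `β x y = ⟪A x, A y⟫ - ⟪x, y⟫`, and this vanishes wherever `Ωᵢⱼ ≠ 0`. The stress
equations then put `j ↦ β pⱼ pⱼ` into `ker Ω`, so for fixed `i` the map `j ↦ β (pᵢ - pⱼ) (pᵢ - pⱼ)`
is an affine function of `pⱼ`. It vanishes on the support of row `i`, which general position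
forces to contain at least `r + 1` points, hence it vanishes identically.
-/

open Finset Module
open scoped InnerProductSpace

section AffineEval

variable {k ι E : Type*} [Field k] [AddCommGroup E] [Module k E]

-- Its range is the column space of the paper's matrix `[P e]`.
def affineEval (p : ι → E) : (E →ᵃ[k] k) →ₗ[k] ι → k where
  toFun φ := φ ∘ p
  map_add' _ _ := rfl
  map_smul' _ _ := rfl

@[simp]
lemma affineEval_apply (p : ι → E) (φ : E →ᵃ[k] k) (i : ι) : affineEval p φ i = φ (p i) := rfl

lemma affineEval_injective {p : ι → E} (hp : affineSpan k (Set.range p) = ⊤) :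
    Function.Injective (affineEval (k := k) p) := fun _ _ h =>
  AffineMap.ext_on hp (by rintro _ ⟨i, rfl⟩; exact congrFun h i)

lemma finrank_range_affineEval [FiniteDimensional k E] {p : ι → E}
    (hp : affineSpan k (Set.range p) = ⊤) :
    finrank k (LinearMap.range (affineEval (k := k) p)) = finrank k E + 1 := by
  rw [LinearMap.finrank_range_of_inj (affineEval_injective hp), AffineMap.finrank_eq,
    finrank_self, mul_one]

lemma sum_mul_affineMap_eq_zero (s : Finset ι) {w : ι → k} {p : ι → E}
    (hw₀ : ∑ i ∈ s, w i = 0) (hw₁ : ∑ i ∈ s, w i • p i = 0) (φ : E →ᵃ[k] k) :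
    ∑ i ∈ s, w i * φ (p i) = 0 := by
  rw [AffineMap.decomp φ]
  simp only [Pi.add_apply, mul_add, sum_add_distrib, ← sum_mul, hw₀, zero_mul, add_zero]
  simpa only [map_sum, map_smul, smul_eq_mul, map_zero] using congrArg φ.linear hw₁

variable [Fintype ι] {Ω : Matrix ι ι k} {p : ι → E}

lemma mulVec_affineEval_eq_zero (hΩe : ∀ i, ∑ j, Ω i j = 0) (hΩp : ∀ i, ∑ j, Ω i j • p j = 0)
    (φ : E →ᵃ[k] k) : Ω *ᵥ affineEval p φ = 0 :=
  funext fun i => sum_mul_affineMap_eq_zero univ (hΩe i) (hΩp i) φ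

lemma ker_mulVecLin_eq_range_affineEval [FiniteDimensional k E] (hΩe : ∀ i, ∑ j, Ω i j = 0)
    (hΩp : ∀ i, ∑ j, Ω i j • p j = 0) (hp : affineSpan k (Set.range p) = ⊤)
    (hrank : Ω.rank + (finrank k E + 1) = Fintype.card ι) :
    LinearMap.ker Ω.mulVecLin = LinearMap.range (affineEval p) := by
  refine (Submodule.eq_of_le_of_finrank_le ?_ ?_).symm
  · rintro _ ⟨φ, rfl⟩
    exact mulVec_affineEval_eq_zero hΩe hΩp φ
  · have := LinearMap.finrank_range_add_finrank_ker Ω.mulVecLin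
    rw [finrank_fintype_fun_eq_card] at this
    rw [Matrix.rank] at hrank
    rw [finrank_range_affineEval hp]
    omega

end AffineEval

namespace InGeneralPosition

variable {n r : ℕ} {p : Fin n → EuclideanSpace ℝ (Fin r)}

lemma affineSpan_eq_top (hgen : InGeneralPosition p) {s : Finset (Fin n)} (hs : #s = r + 1) :
    affineSpan ℝ (Set.range fun i : s => p i) = ⊤ := by
  rw [(hgen s hs).affineSpan_eq_top_iff_card_eq_finrank_add_one]
  simp [hs]

lemma eq_zero_of_forall_mem (hgen : InGeneralPosition p) {s : Finset (Fin n)} (hs : #s = r + 1)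
    {φ : EuclideanSpace ℝ (Fin r) →ᵃ[ℝ] ℝ} (hφ : ∀ i ∈ s, φ (p i) = 0) : φ = 0 :=
  affineEval_injective (hgen.affineSpan_eq_top hs) (funext fun i => hφ i i.2)

lemma eq_zero_of_support_subset (hgen : InGeneralPosition p) {s : Finset (Fin n)}
    (hs : #s = r + 1) {w : Fin n → ℝ} (hws : ∀ j ∉ s, w j = 0) (hw₀ : ∑ j, w j = 0)
    (hw₁ : ∑ j, w j • p j = 0) : w = 0 := by
  have hsum {M : Type} [AddCommMonoid M] (f : Fin n → M) (hf : ∀ j ∉ s, f j = 0) :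
      ∑ j : s, f j = ∑ j, f j := by
    rw [sum_coe_sort]
    exact sum_subset (subset_univ s) fun j _ hj => hf j hj
  funext j
  by_cases hj : j ∈ s
  · refine (hgen s hs).eq_zero_of_sum_eq_zero (s := univ) (w := fun j : s => w j) ?_ ?_
      ⟨j, hj⟩ (mem_univ _)
    · exact (hsum w hws).trans hw₀
    · exact (hsum (fun j => w j • p j) fun j hj => by simp [hws j hj]).trans hw₁
  · exact hws j hj

lemma single_notMem_range_affineEval (hgen : InGeneralPosition p) (hn : r + 2 ≤ n) (i : Fin n) :
    Pi.single i 1 ∉ LinearMap.range (affineEval (k := ℝ) p) := by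
  rintro ⟨φ, hφ⟩
  obtain ⟨s, hsi, hs⟩ := exists_subset_card_eq (s := univ.erase i) (n := r + 1)
    (by rw [card_erase_of_mem (mem_univ i), card_univ, Fintype.card_fin]; omega)
  have hφ0 : φ = 0 := hgen.eq_zero_of_forall_mem hs fun j hj => by
    rw [← affineEval_apply, hφ, Pi.single_eq_of_ne (ne_of_mem_erase (hsi hj))]
  simpa [hφ0] using congrFun hφ i

end InGeneralPosition

section Stress

variable {ι : Type*}

lemma exists_linearMap_sub_eq {E : Type*} [AddCommGroup E] [Module ℝ E] {p : ι → E} {d : ℕ}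
    {q : ι → EuclideanSpace ℝ (Fin d)}
    (hq : ∀ k, (fun i => q i k) ∈ LinearMap.range (affineEval (k := ℝ) p)) :
    ∃ A : E →ₗ[ℝ] EuclideanSpace ℝ (Fin d), ∀ i j, q i - q j = A (p i - p j) := by
  choose φ hφ using hq
  refine ⟨(EuclideanSpace.equiv (Fin d) ℝ).symm.toLinearMap ∘ₗ
    LinearMap.pi fun k => (φ k).linear, fun i j => ?_⟩
  ext k
  have hk (a : ι) : q a k = φ k (p a) := (congrFun (hφ k) a).symm
  simpa [hk] using ((φ k).linearMap_vsub (p i) (p j)).symm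

variable [Fintype ι]

lemma sum_sum_mul_norm_sub_sq {F : Type*} [NormedAddCommGroup F] [InnerProductSpace ℝ F]
    {Ω : Matrix ι ι ℝ} (hsymm : Ω.IsSymm) (hΩe : ∀ i, ∑ j, Ω i j = 0) (y : ι → F) :
    ∑ i, ∑ j, Ω i j * ‖y i - y j‖ ^ 2 = -2 * ∑ i, ∑ j, Ω i j * ⟪y i, y j⟫_ℝ := by
  have hcol : ∀ j, ∑ i, Ω i j = 0 := fun j => by simpa only [hsymm.apply] using hΩe j
  have hexpand : ∀ i j, Ω i j * ‖y i - y j‖ ^ 2 =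
      Ω i j * ‖y i‖ ^ 2 + Ω i j * ‖y j‖ ^ 2 - 2 * (Ω i j * ⟪y i, y j⟫_ℝ) := fun i j => by
    rw [norm_sub_sq_real]; ring
  simp only [hexpand, sum_sub_distrib, sum_add_distrib, ← sum_mul, hΩe, ← mul_sum]
  rw [sum_comm (f := fun i j => Ω i j * ‖y j‖ ^ 2)]
  simp only [← sum_mul, hcol, zero_mul, sum_const_zero]
  ring

lemma sum_sum_mul_inner_eq_zero {F : Type*} [NormedAddCommGroup F] [InnerProductSpace ℝ F]
    {Ω : Matrix ι ι ℝ} {p : ι → F} (hΩp : ∀ i, ∑ j, Ω i j • p j = 0) :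
    ∑ i, ∑ j, Ω i j * ⟪p i, p j⟫_ℝ = 0 :=
  sum_eq_zero fun i _ => by
    simpa [inner_sum, real_inner_smul_right] using congrArg (inner ℝ (p i)) (hΩp i)

lemma Matrix.PosSemidef.mulVec_coord_eq_zero {Ω : Matrix ι ι ℝ} (hpsd : Ω.PosSemidef) {d : ℕ}
    {q : ι → EuclideanSpace ℝ (Fin d)} (hq : ∑ i, ∑ j, Ω i j * ⟪q i, q j⟫_ℝ = 0) (k : Fin d) :
    Ω *ᵥ (fun i => q i k) = 0 := by
  have hsum : ∑ i, ∑ j, Ω i j * ⟪q i, q j⟫_ℝ =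
      ∑ k, star (fun i => q i k) ⬝ᵥ Ω *ᵥ (fun i => q i k) := by
    simp only [PiLp.inner_apply, RCLike.inner_apply, conj_trivial, star_trivial, dotProduct,
      mulVec, mul_sum]
    conv_rhs => rw [sum_comm]
    refine sum_congr rfl fun i _ => ?_
    conv_rhs => rw [sum_comm]
    exact sum_congr rfl fun j _ => sum_congr rfl fun k _ => by ring
  rw [← hpsd.dotProduct_mulVec_zero_iff]
  exact (sum_eq_zero_iff_of_nonneg fun k _ => hpsd.dotProduct_mulVec_nonneg _).1
    (hsum.symm.trans hq) k (mem_univ k)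

lemma mulVec_bilin_self_eq_zero {k E : Type*} [CommRing k] [AddCommGroup E] [Module k E]
    {Ω : Matrix ι ι k} {p : ι → E} (hΩe : ∀ i, ∑ j, Ω i j = 0)
    (hΩp : ∀ i, ∑ j, Ω i j • p j = 0) (β : LinearMap.BilinForm k E)
    (hβ : ∀ i j, Ω i j ≠ 0 → β (p i - p j) (p i - p j) = 0) :
    Ω *ᵥ (fun j => β (p j) (p j)) = 0 := by
  funext i
  have hdiff : ∑ j, Ω i j * β (p i - p j) (p i - p j) = 0 :=
    sum_eq_zero fun j _ => by
      by_cases h : Ω i j = 0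
      · rw [h, zero_mul]
      · rw [hβ i j h, mul_zero]
  have hleft : ∑ j, Ω i j * β (p i) (p j) = 0 := by
    simpa only [map_sum, map_smul, smul_eq_mul, map_zero] using congrArg (β (p i)) (hΩp i)
  have hright : ∑ j, Ω i j * β (p j) (p i) = 0 := by
    simpa only [map_sum, LinearMap.sum_apply, map_smul, LinearMap.smul_apply, smul_eq_mul,
      map_zero, LinearMap.zero_apply] using congrArg (fun v => β v (p i)) (hΩp i)
  have hconst : ∑ j, Ω i j * β (p i) (p i) = 0 := by rw [← sum_mul, hΩe, zero_mul]
  simp only [map_sub, LinearMap.sub_apply, mul_sub, sum_sub_distrib] at hdiff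
  simp only [mulVec, dotProduct, Pi.zero_apply]
  linear_combination hdiff - hconst + hleft + hright

end Stress

section Rigidity

variable {n r : ℕ} {Ω : Matrix (Fin n) (Fin n) ℝ} {p : Fin n → EuclideanSpace ℝ (Fin r)}

lemma InGeneralPosition.le_card_row_support (hgen : InGeneralPosition p) (hn : r + 2 ≤ n)
    (hsymm : Ω.IsSymm) (hΩe : ∀ i, ∑ j, Ω i j = 0) (hΩp : ∀ i, ∑ j, Ω i j • p j = 0)
    (hker : LinearMap.ker Ω.mulVecLin ≤ LinearMap.range (affineEval p)) (i : Fin n) :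
    r + 1 ≤ #{j | Ω i j ≠ 0} := by
  -- Otherwise row `i` is an affine dependence among `r + 1` points in general position.
  by_contra! hlt
  obtain ⟨s, hsupp, hs⟩ := exists_superset_card_eq hlt.le
    (by rw [Fintype.card_fin]; omega)
  have hrow : (fun j => Ω i j) = 0 := hgen.eq_zero_of_support_subset hs
    (fun j hj => by_contra fun h => hj (hsupp (by simpa using h))) (hΩe i) (hΩp i)
  refine hgen.single_notMem_range_affineEval hn i (hker ?_)
  ext j
  simpa [hsymm.apply] using congrFun hrow j

lemma InGeneralPosition.bilin_sub_self_eq_zero (hgen : InGeneralPosition p) (hn : r + 2 ≤ n)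
    (hsymm : Ω.IsSymm) (hΩe : ∀ i, ∑ j, Ω i j = 0) (hΩp : ∀ i, ∑ j, Ω i j • p j = 0)
    (hker : LinearMap.ker Ω.mulVecLin ≤ LinearMap.range (affineEval p))
    (β : LinearMap.BilinForm ℝ (EuclideanSpace ℝ (Fin r)))
    (hβ : ∀ i j, Ω i j ≠ 0 → β (p i - p j) (p i - p j) = 0) (i j : Fin n) :
    β (p i - p j) (p i - p j) = 0 := by
  obtain ⟨φ, hφ⟩ := hker (mulVec_bilin_self_eq_zero hΩe hΩp β hβ)
  let ψ : EuclideanSpace ℝ (Fin r) →ᵃ[ℝ] ℝ := φ - (β (p i)).toAffineMap -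
    (β.flip (p i)).toAffineMap + AffineMap.const ℝ _ (β (p i) (p i))
  have hψ (j : Fin n) : ψ (p j) = β (p i - p j) (p i - p j) := by
    have hφj : φ (p j) = β (p j) (p j) := congrFun hφ j
    simp only [ψ, AffineMap.coe_add, AffineMap.coe_sub, LinearMap.coe_toAffineMap,
      AffineMap.coe_const, Pi.add_apply, Pi.sub_apply, Function.const_apply,
      LinearMap.BilinForm.flip_apply, hφj, map_sub, LinearMap.sub_apply]
    ring
  obtain ⟨s, hsupp, hs⟩ := exists_subset_card_eq (hgen.le_card_row_support hn hsymm hΩe hΩp hker i)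
  have hψ0 : ψ = 0 := hgen.eq_zero_of_forall_mem hs fun j hj => by
    rw [hψ]
    exact hβ i j (mem_filter.1 (hsupp hj)).2
  rw [← hψ, hψ0, AffineMap.coe_zero, Pi.zero_apply]

lemma InGeneralPosition.norm_sub_eq_of_psd_stress (hgen : InGeneralPosition p) (hn : r + 2 ≤ n)
    (hsymm : Ω.IsSymm) (hΩe : ∀ i, ∑ j, Ω i j = 0) (hΩp : ∀ i, ∑ j, Ω i j • p j = 0)
    (hpsd : Ω.PosSemidef) (hker : LinearMap.ker Ω.mulVecLin ≤ LinearMap.range (affineEval p))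
    {d : ℕ} (q : Fin n → EuclideanSpace ℝ (Fin d))
    (hq : ∀ i j, Ω i j ≠ 0 → ‖q i - q j‖ = ‖p i - p j‖) (i j : Fin n) :
    ‖q i - q j‖ = ‖p i - p j‖ := by
  have hstress : ∑ i, ∑ j, Ω i j * ⟪q i, q j⟫_ℝ = 0 := by
    have hsame : ∑ i, ∑ j, Ω i j * ‖q i - q j‖ ^ 2 = ∑ i, ∑ j, Ω i j * ‖p i - p j‖ ^ 2 :=
      sum_congr rfl fun i _ => sum_congr rfl fun j _ => by
        by_cases h : Ω i j = 0
        · simp [h]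
        · rw [hq i j h]
    rw [sum_sum_mul_norm_sub_sq hsymm hΩe, sum_sum_mul_norm_sub_sq hsymm hΩe,
      sum_sum_mul_inner_eq_zero hΩp] at hsame
    linarith
  obtain ⟨A, hA⟩ := exists_linearMap_sub_eq fun k => hker (hpsd.mulVec_coord_eq_zero hstress k)
  let β : LinearMap.BilinForm ℝ (EuclideanSpace ℝ (Fin r)) := (innerₗ _).compl₁₂ A A - innerₗ _
  have hβ (i j : Fin n) : β (p i - p j) (p i - p j) = ‖q i - q j‖ ^ 2 - ‖p i - p j‖ ^ 2 := by
    simp only [β, LinearMap.sub_apply, LinearMap.compl₁₂_apply, innerₗ_apply_apply, ← hA,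
      real_inner_self_eq_norm_sq]
  have hsq := hgen.bilin_sub_self_eq_zero hn hsymm hΩe hΩp hker β
    (fun i j h => by rw [hβ, hq i j h, sub_self]) i j
  rw [hβ, sub_eq_zero] at hsq
  exact (sq_eq_sq₀ (norm_nonneg _) (norm_nonneg _)).1 hsq

end Rigidity

namespace IsStressMatrix

variable {n r : ℕ} {G : SimpleGraph (Fin n)} {p : Fin n → EuclideanSpace ℝ (Fin r)}
  {Ω : Matrix (Fin n) (Fin n) ℝ}

lemma sum_row_eq_zero (hΩ : IsStressMatrix G p Ω) (i : Fin n) : ∑ j, Ω i j = 0 := by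
  simpa [mulVec, dotProduct] using congrFun hΩ.2.2.2 i

lemma sum_smul_eq_zero (hΩ : IsStressMatrix G p Ω) (i : Fin n) : ∑ j, Ω i j • p j = 0 := by
  ext m
  simpa [Matrix.mul_apply, configMatrix] using congrFun (congrFun hΩ.2.2.1 i) m

end IsStressMatrix

/-- **Alfakih–Ye.** If an `r`-dimensional framework `(G, p)` on `n` nodes, `r ≤ n - 2`, admits a
positive semidefinite stress matrix `Ω` of rank `n - r - 1` and `p` is in general position,
then `(G, p)` is universally rigid. -/
theorem universally_rigid_of_psd_stress_matrix
    (n r : ℕ) (hrn : r + 2 ≤ n) (G : SimpleGraph (Fin n))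
    (p : Fin n → EuclideanSpace ℝ (Fin r)) (hdim : IsRDimensional p)
    (Ω : Matrix (Fin n) (Fin n) ℝ)
    (hΩ : IsStressMatrix G p Ω) (hpsd : Ω.PosSemidef) (hrank : Ω.rank = n - r - 1)
    (hgen : InGeneralPosition p) :
    UniversallyRigid G p := by
  intro r' _ _ q _ hequiv i j
  have hker := ker_mulVecLin_eq_range_affineEval hΩ.sum_row_eq_zero hΩ.sum_smul_eq_zero hdim
    (by rw [hrank, finrank_euclideanSpace_fin, Fintype.card_fin]; omega)
  refine hgen.norm_sub_eq_of_psd_stress hrn hΩ.1 hΩ.sum_row_eq_zero hΩ.sum_smul_eq_zero hpsd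
    hker.le q (fun i j hΩij => ?_) i j
  rcases eq_or_ne i j with rfl | hne
  · simp
  · exact hequiv i j (by_contra fun hadj => hΩij (hΩ.2.1 i j hne hadj))
end

section
/- Let X^T be an (n−r−1)×n real matrix with columns x^1,…,x^n, where 1 ≤ r ≤ n−2, such that every subset of {x^1,…,x^n} of size n−r−1 is linearly independent. Then there exists a vector ξ = (ξ_1,…,ξ_n) ∈ ℝ^n such that X^T ξ = 0 and ξ_i ≠ 0 for every i = 1,…,n. -/
/-! For each `i`, choose `n - r - 1` rows of `X` other than row `i`: by hypothesis they form a
basis, so row `i` is a combination of them, which gives a linear relation among the rows whose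
`i`-th coefficient is nonzero. Thus the space of relations lies in no coordinate hyperplane, and
since a real vector space is not a finite union of proper subspaces, it contains a relation with
all coefficients nonzero. -/

open Matrix

section GeneralPosition

open Module

variable {K V ι : Type*} [Field K] [AddCommGroup V] [Module K V]

theorem exists_sum_smul_eq_zero_of_mem_span_compl [Fintype ι] {v : ι → V} {i : ι}
    (hi : v i ∈ Submodule.span K (v '' {i}ᶜ)) :
    ∃ c : ι → K, ∑ j, c j • v j = 0 ∧ c i ≠ 0 := by
  obtain ⟨l, hl, hli⟩ := (Finsupp.mem_span_image_iff_linearCombination K).mp hi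
  have hl_i : l i = 0 := Finsupp.notMem_support_iff.mp fun h => hl h rfl
  let c : ι →₀ K := l - Finsupp.single i 1
  refine ⟨c, ?_, by simp [c, hl_i]⟩
  calc ∑ j, c j • v j = Finsupp.linearCombination K v c := by
        rw [Finsupp.linearCombination_apply, Finsupp.sum_fintype _ _ (by simp)]
    _ = 0 := by simp [c, hli]

theorem mem_span_compl_of_forall_card_eq_finrank [FiniteDimensional K V] [Fintype ι]
    {v : ι → V}
    (hv : ∀ s : Finset ι, s.card = finrank K V → LinearIndependent K (fun j : s => v j))
    (hcard : finrank K V ≤ Fintype.card ι - 1) (i : ι) :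
    v i ∈ Submodule.span K (v '' {i}ᶜ) := by
  classical
  obtain ⟨s, hs_sub, hs_card⟩ := Finset.exists_subset_card_eq (s := {i}ᶜ) (n := finrank K V)
    (by rwa [Finset.card_compl, Finset.card_singleton])
  have hspan : Submodule.span K (Set.range fun j : s => v j) = ⊤ :=
    (hv s hs_card).span_eq_top_of_card_eq_finrank' (by simp [hs_card])
  refine Submodule.span_mono ?_ (hspan ▸ Submodule.mem_top)
  rintro _ ⟨⟨j, hj⟩, rfl⟩
  exact ⟨j, by simpa using hs_sub hj, rfl⟩

theorem exists_sum_smul_eq_zero_and_forall_ne_zero [Infinite K] [FiniteDimensional K V] [Fintype ι]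
    {v : ι → V}
    (hv : ∀ s : Finset ι, s.card = finrank K V → LinearIndependent K (fun j : s => v j))
    (hcard : finrank K V ≤ Fintype.card ι - 1) :
    ∃ c : ι → K, ∑ j, c j • v j = 0 ∧ ∀ j, c j ≠ 0 := by
  have hrel (i : ι) : ∃ c ∈ LinearMap.ker (Fintype.linearCombination K v),
      (LinearMap.proj i : (ι → K) →ₗ[K] K) c ≠ 0 :=
    exists_sum_smul_eq_zero_of_mem_span_compl (mem_span_compl_of_forall_card_eq_finrank hv hcard i)
  exact Dual.exists_forall_mem_ne_zero_of_forall_exists _ _ hrel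

end GeneralPosition

theorem exists_nowhere_zero_null_vector_general
    (n r : ℕ)
    (X : Matrix (Fin n) (Fin (n - r - 1)) ℝ)
    (hgen : ∀ s : Finset (Fin n), s.card = n - r - 1 →
      LinearIndependent ℝ (fun i : s => X i)) :
    ∃ ξ : Fin n → ℝ, Xᵀ *ᵥ ξ = 0 ∧ ∀ i : Fin n, ξ i ≠ 0 := by
  obtain ⟨ξ, hξ, hξ_ne⟩ := exists_sum_smul_eq_zero_and_forall_ne_zero (K := ℝ) (v := X)
    (by simpa using hgen) (by simp only [Module.finrank_fin_fun, Fintype.card_fin]; omega)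
  exact ⟨ξ, by rwa [mulVec_transpose, vecMul_eq_sum], hξ_ne⟩

/-- **Lemma 3.1.** If `Xᵀ` is an `(n-r-1) × n` matrix, `1 ≤ r ≤ n - 2`, whose columns
(the rows `X i` of `X`) have the property that every `n - r - 1` of them are linearly
independent, then there is a vector `ξ ∈ ℝⁿ` with `Xᵀ ξ = 0` and `ξ i ≠ 0` for all `i`. -/
theorem exists_nowhere_zero_null_vector
    (n r : ℕ) (hr : 1 ≤ r) (hrn : r + 2 ≤ n)
    (X : Matrix (Fin n) (Fin (n - r - 1)) ℝ)
    (hgen : ∀ s : Finset (Fin n), s.card = n - r - 1 →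
      LinearIndependent ℝ (fun i : s => X i)) :
    ∃ ξ : Fin n → ℝ, Xᵀ *ᵥ ξ = 0 ∧ ∀ i : Fin n, ξ i ≠ 0 :=
  exists_nowhere_zero_null_vector_general n r X hgen
end

section
/- Let X^T be an (n−r−1)×n real matrix with columns x^1,…,x^n, 1 ≤ r ≤ n−2, such that every subset of {x^1,…,x^n} of size n−r−1 is linearly independent, and let ξ ∈ ℝ^n satisfy X^T ξ = 0 with ξ_i ≠ 0 for all i. Set Z = Diag(ξ) X, where Diag(ξ) is the diagonal matrix with diagonal ξ. Let P be an n×r matrix whose columns form a basis of the null space of the matrix obtained by stacking Z^T on top of e^T (e the all-ones vector in ℝ^n), and let p be the configuration in ℝ^r whose configuration matrix is P. Then p is an r-dimensional configuration in general position in ℝ^r and Z is a Gale matrix of p. -/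
open Matrix

/-! Work in `ℝⁿ` with the dot product and let `e` be the all-ones vector. The hypothesis on `P`
says `col P = (col Z + ℝ e)ᗮ`. The columns of `Z` are orthogonal to `e` (this is `Xᵀ ξ = 0`), so
taking complements and using the modular law together with `e ⬝ᵥ e = n ≠ 0` gives
`col Z = (col P)ᗮ ∩ eᗮ = ker [Pᵀ; eᵀ]`. An affine dependence among `r + 1` of the points `pⁱ` is a
vector of this kernel, hence of the form `Z μ`, vanishing at the other `n - r - 1` indices; as any
`n - r - 1` rows `ξᵢ xⁱ` of `Z` are independent, `μ = 0`. The same fact makes the columns of `Z`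
independent, and any `r + 1` affinely independent points span `ℝʳ`. -/

open Submodule
open LinearMap (BilinForm)

namespace LinearMap.BilinForm

variable {R M : Type*} [CommSemiring R] [AddCommMonoid M] [Module R M] (B : BilinForm R M)

theorem orthogonal_sup (N L : Submodule R M) :
    B.orthogonal (N ⊔ L) = B.orthogonal N ⊓ B.orthogonal L := by
  refine le_antisymm (le_inf (orthogonal_le le_sup_left) (orthogonal_le le_sup_right)) ?_
  rintro x ⟨hN, hL⟩
  refine mem_orthogonal_iff.2 fun y hy => ?_
  obtain ⟨a, ha, b, hb, rfl⟩ := mem_sup.1 hy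
  rw [map_add, LinearMap.add_apply, mem_orthogonal_iff.1 hN a ha, mem_orthogonal_iff.1 hL b hb,
    add_zero]

theorem mem_orthogonal_span_iff {S : Set M} {x : M} :
    x ∈ B.orthogonal (span R S) ↔ ∀ y ∈ S, B y x = 0 :=
  span_le (p := LinearMap.ker (B.flip x))

theorem orthogonal_sup_span_singleton_of_eq_orthogonal
    {K V : Type*} [Field K] [AddCommGroup V] [Module K V] [FiniteDimensional K V]
    {B : BilinForm K V} (hB : B.Nondegenerate) (hB₀ : B.IsRefl) {e : V}
    (he : B e e ≠ 0) {U W : Submodule K V} (hU : U ≤ B.orthogonal (K ∙ e))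
    (hW : W = B.orthogonal (U ⊔ K ∙ e)) :
    B.orthogonal (W ⊔ K ∙ e) = U := by
  rw [orthogonal_sup, hW, orthogonal_orthogonal hB hB₀, sup_inf_assoc_of_le _ hU,
    span_singleton_inf_orthogonal_eq_bot he, sup_bot_eq]

end LinearMap.BilinForm

section DotProduct

variable {K n ι κ : Type*} [Field K] [Fintype n]

theorem dotProductBilin_isRefl :
    BilinForm.IsRefl (dotProductBilin K K : BilinForm K (n → K)) := by
  intro v w h
  rwa [dotProductBilin_apply_apply, dotProduct_comm, ← dotProductBilin_apply_apply K K]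

theorem dotProductBilin_nondegenerate :
    BilinForm.Nondegenerate (dotProductBilin K K : BilinForm K (n → K)) := by
  classical
  refine (LinearMap.IsRefl.nondegenerate_iff_separatingLeft
    (dotProductBilin_isRefl (K := K) (n := n))).2 fun v hv => ?_
  ext i
  simpa using hv (Pi.single i 1)

theorem Matrix.ker_mulVecLin_transpose (A : Matrix n ι K) :
    LinearMap.ker Aᵀ.mulVecLin =
      BilinForm.orthogonal (dotProductBilin K K) (span K (Set.range A.col)) := by
  ext v
  rw [BilinForm.mem_orthogonal_span_iff, Set.forall_mem_range, LinearMap.mem_ker,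
    mulVecLin_apply, funext_iff]
  rfl

theorem Matrix.ker_mulVecLin_fromRows {m₁ m₂ : Type*} (A₁ : Matrix m₁ n K) (A₂ : Matrix m₂ n K) :
    LinearMap.ker (fromRows A₁ A₂).mulVecLin =
      LinearMap.ker A₁.mulVecLin ⊓ LinearMap.ker A₂.mulVecLin := by
  ext v
  simp only [LinearMap.mem_ker, mem_inf, mulVecLin_apply, fromRows_mulVec,
    ← Sum.elim_zero_zero, Sum.elim_eq_iff]

theorem Matrix.ker_mulVecLin_fromRows_ones (A : Matrix n ι K) :
    LinearMap.ker (fromRows Aᵀ (of fun (_ : Unit) (_ : n) => (1 : K))).mulVecLin =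
      BilinForm.orthogonal (dotProductBilin K K)
        (span K (Set.range A.col) ⊔ K ∙ 1) := by
  have h1 : (of fun (_ : Unit) (_ : n) => (1 : K)) = (of fun (_ : n) (_ : Unit) => (1 : K))ᵀ := rfl
  have h2 : span K (Set.range (of fun (_ : n) (_ : Unit) => (1 : K)).col) = K ∙ 1 := by
    change span K (Set.range fun _ : Unit => (1 : n → K)) = span K {1}
    rw [Set.range_const]
  rw [ker_mulVecLin_fromRows, h1, ker_mulVecLin_transpose, ker_mulVecLin_transpose, h2,
    BilinForm.orthogonal_sup]

theorem Matrix.span_col_eq_ker_fromRows_ones_of_span_col_eq_ker [CharZero K] [Nonempty n]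
    [Fintype ι] [Fintype κ]
    {A : Matrix n ι K} {C : Matrix n κ K} (hA : ∀ j, ∑ i, A i j = 0)
    (hC : span K (Set.range C.col) =
      LinearMap.ker (fromRows Aᵀ (of fun (_ : Unit) (_ : n) => (1 : K))).mulVecLin) :
    span K (Set.range A.col) =
      LinearMap.ker (fromRows Cᵀ (of fun (_ : Unit) (_ : n) => (1 : K))).mulVecLin := by
  rw [ker_mulVecLin_fromRows_ones] at hC ⊢
  refine (BilinForm.orthogonal_sup_span_singleton_of_eq_orthogonal
    dotProductBilin_nondegenerate dotProductBilin_isRefl ?_ ?_ hC).symm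
  · simp
  · rw [span_le]
    rintro _ ⟨j, rfl⟩
    refine (BilinForm.mem_orthogonal_span_iff _).2 fun y hy => ?_
    rw [Set.mem_singleton_iff.1 hy, dotProductBilin_apply_apply, one_dotProduct]
    exact hA j

theorem LinearIndependent.eq_zero_of_forall_dotProduct_eq_zero [Fintype ι] {t : Type*} [Fintype t]
    {v : t → ι → K} (hv : LinearIndependent K v) (hcard : Fintype.card t = Fintype.card ι)
    {μ : ι → K} (h : ∀ i, v i ⬝ᵥ μ = 0) : μ = 0 := by
  have hspan : span K (Set.range v) = ⊤ :=
    hv.span_eq_top_of_card_eq_finrank' (by rwa [Module.finrank_fintype_fun_eq_card])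
  have hμ : μ ∈ BilinForm.orthogonal (dotProductBilin K K) (span K (Set.range v)) :=
    (BilinForm.mem_orthogonal_span_iff _).2 (Set.forall_mem_range.2 h)
  rwa [hspan, BilinForm.orthogonal_top_eq_bot dotProductBilin_nondegenerate] at hμ

end DotProduct

theorem Fintype.sum_dite_mem {α M : Type*} [Fintype α] [DecidableEq α] [AddCommMonoid M]
    (s : Finset α) (f : s → M) : ∑ a, (if h : a ∈ s then f ⟨a, h⟩ else 0) = ∑ a : s, f a := by
  rw [← Finset.sum_subset (Finset.subset_univ s) fun a _ ha => dif_neg ha, ← Finset.sum_coe_sort s]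
  exact Finset.sum_congr rfl fun a _ => dif_pos a.2

section Configuration

variable {n r : ℕ} {p : Fin n → EuclideanSpace ℝ (Fin r)}

theorem galeStack_eq_fromRows {P : Matrix (Fin n) (Fin r) ℝ} (hp : ∀ i k, p i k = P i k) :
    galeStack p = fromRows Pᵀ (of fun (_ : Unit) (_ : Fin n) => (1 : ℝ)) := by
  ext (k | _) i <;> simp [galeStack, hp]

theorem mem_ker_galeStack_iff {v : Fin n → ℝ} :
    v ∈ LinearMap.ker (galeStack p).mulVecLin ↔ ∑ i, v i • p i = 0 ∧ ∑ i, v i = 0 := by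
  rw [galeStack, Matrix.ker_mulVecLin_fromRows, mem_inf, LinearMap.mem_ker, LinearMap.mem_ker]
  congr! 1
  · rw [mulVecLin_apply, funext_iff, PiLp.ext_iff]
    simp [mulVec, dotProduct, mul_comm]
  · simp [funext_iff, mulVec, dotProduct]

theorem affineIndependent_of_ker_galeStack (s : Finset (Fin n))
    (h : ∀ v ∈ LinearMap.ker (galeStack p).mulVecLin, (∀ i ∉ s, v i = 0) → v = 0) :
    AffineIndependent ℝ (fun i : s => p i) := by
  rw [affineIndependent_iff_of_fintype]
  intro w hw hwp i
  rw [Finset.weightedVSub_eq_linear_combination _ hw] at hwp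
  set v : Fin n → ℝ := fun i => if h : i ∈ s then w ⟨i, h⟩ else 0
  have hv : v ∈ LinearMap.ker (galeStack p).mulVecLin := by
    refine mem_ker_galeStack_iff.2 ⟨?_, ?_⟩
    · simp only [v, dite_smul, zero_smul]
      exact (Fintype.sum_dite_mem s fun j => w j • p j).trans hwp
    · exact (Fintype.sum_dite_mem s w).trans hw
  simpa [v] using congr_fun (h v hv fun i hi => dif_neg hi) i

theorem InGeneralPosition.isRDimensional (hp : InGeneralPosition p) (hrn : r + 1 ≤ n) :
    IsRDimensional p := by
  obtain ⟨s, -, hs⟩ := Finset.exists_subset_card_eq (s := (Finset.univ : Finset (Fin n)))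
    (n := r + 1) (by simpa using hrn)
  have hspan := ((hp s hs).affineSpan_eq_top_iff_card_eq_finrank_add_one).2 (by simp [hs])
  exact top_le_iff.1 (hspan ▸ affineSpan_mono ℝ (Set.range_comp_subset_range _ p))

end Configuration

theorem general_position_configuration_from_orthogonal_representation_general
    (n r : ℕ) (hrn : r + 2 ≤ n)
    (X : Matrix (Fin n) (Fin (n - r - 1)) ℝ)
    (hgen : ∀ s : Finset (Fin n), s.card = n - r - 1 →
      LinearIndependent ℝ (fun i : s => X i))
    (ξ : Fin n → ℝ) (hξ0 : Xᵀ *ᵥ ξ = 0) (hξ : ∀ i : Fin n, ξ i ≠ 0)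
    (Z : Matrix (Fin n) (Fin (n - r - 1)) ℝ) (hZ : Z = Matrix.diagonal ξ * X)
    (P : Matrix (Fin n) (Fin r) ℝ)
    (hPspan : Submodule.span ℝ (Set.range (fun k : Fin r => fun i => P i k)) =
      LinearMap.ker
        (Matrix.fromRows Zᵀ (Matrix.of fun (_ : Unit) (_ : Fin n) => (1 : ℝ))).mulVecLin)
    (p : Fin n → EuclideanSpace ℝ (Fin r)) (hp : ∀ i k, p i k = P i k) :
    IsRDimensional p ∧ InGeneralPosition p ∧ IsGaleMatrix p Z := by
  have : Nonempty (Fin n) := ⟨⟨0, by omega⟩⟩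
  have hZ_col_sum : ∀ j, ∑ i, Z i j = 0 := fun j => by
    simpa [hZ, mulVec, dotProduct, mul_comm] using congr_fun hξ0 j
  have hgale : span ℝ (Set.range Z.col) = LinearMap.ker (galeStack p).mulVecLin := by
    rw [galeStack_eq_fromRows hp]
    exact span_col_eq_ker_fromRows_ones_of_span_col_eq_ker hZ_col_sum hPspan
  have hZ_rows : ∀ t : Finset (Fin n), t.card = n - r - 1 →
      ∀ μ, (∀ i ∈ t, (Z *ᵥ μ) i = 0) → μ = 0 := by
    intro t ht μ hμ
    refine (hgen t ht).eq_zero_of_forall_dotProduct_eq_zero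
      (by rw [Fintype.card_coe, ht, Fintype.card_fin]) fun i => ?_
    have hi := hμ i i.2
    rw [hZ, ← mulVec_mulVec, mulVec_diagonal] at hi
    exact (mul_eq_zero.1 hi).resolve_left (hξ i)
  have hgp : InGeneralPosition p := fun s hs =>
    affineIndependent_of_ker_galeStack s fun v hv hvs => by
      obtain ⟨μ, rfl⟩ : v ∈ LinearMap.range Z.mulVecLin := by rwa [range_mulVecLin, hgale]
      have hsc : sᶜ.card = n - r - 1 := by rw [Finset.card_compl, hs, Fintype.card_fin]; omega
      rw [hZ_rows sᶜ hsc μ fun i hi => hvs i (Finset.mem_compl.1 hi), map_zero]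
  obtain ⟨t, -, ht⟩ := Finset.exists_subset_card_eq (s := (Finset.univ : Finset (Fin n)))
    (n := n - r - 1) (by simp; omega)
  refine ⟨hgp.isRDimensional (by omega), hgp, mulVec_injective_iff.1 ?_, hgale⟩
  exact (injective_iff_map_eq_zero Z.mulVecLin).2 fun μ hμ =>
    hZ_rows t ht μ fun i _ => congr_fun hμ i

/-- **Lemma 3.2.** Let `X` be such that every `n - r - 1` rows are linearly independent,
`1 ≤ r ≤ n - 2`, let `ξ` satisfy `Xᵀ ξ = 0` with all entries nonzero, and set
`Z = Diag(ξ) X`. If `P` is an `n × r` matrix whose columns form a basis of the null space of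
the matrix `[Zᵀ; eᵀ]`, and `p` is the configuration with configuration matrix `P`, then `p` is
an `r`-dimensional configuration in general position in `ℝ^r` and `Z` is a Gale matrix of `p`. -/
theorem general_position_configuration_from_orthogonal_representation
    (n r : ℕ) (hr : 1 ≤ r) (hrn : r + 2 ≤ n)
    (X : Matrix (Fin n) (Fin (n - r - 1)) ℝ)
    (hgen : ∀ s : Finset (Fin n), s.card = n - r - 1 →
      LinearIndependent ℝ (fun i : s => X i))
    (ξ : Fin n → ℝ) (hξ0 : Xᵀ *ᵥ ξ = 0) (hξ : ∀ i : Fin n, ξ i ≠ 0)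
    (Z : Matrix (Fin n) (Fin (n - r - 1)) ℝ) (hZ : Z = Matrix.diagonal ξ * X)
    (P : Matrix (Fin n) (Fin r) ℝ)
    (hPindep : LinearIndependent ℝ (fun k : Fin r => fun i => P i k))
    (hPspan : Submodule.span ℝ (Set.range (fun k : Fin r => fun i => P i k)) =
      LinearMap.ker
        (Matrix.fromRows Zᵀ (Matrix.of fun (_ : Unit) (_ : Fin n) => (1 : ℝ))).mulVecLin)
    (p : Fin n → EuclideanSpace ℝ (Fin r)) (hp : ∀ i k, p i k = P i k) :
    IsRDimensional p ∧ InGeneralPosition p ∧ IsGaleMatrix p Z :=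
  general_position_configuration_from_orthogonal_representation_general n r hrn X hgen ξ hξ0 hξ Z hZ
    P hPspan p hp
end
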